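/- Let F(t) = (1 − ε)Φ(t) + εΦ(t − μ) with 0 < ε ≤ 1 and μ > 0, and let 0 ≤ τ < τ′. Then μ is the unique solution in (0, ∞) of the equation D(m; τ, τ′) = [Φ(τ) − F(τ)]/[Φ(τ′) − F(τ′)], and ε = [Φ(τ) − F(τ)]/[Φ(τ) − Φ(τ − μ)]. Consequently, if two two-point Gaussian mixtures with parameters (ε_1, μ_1) and (ε_2, μ_2), ε_i ∈ (0, 1], μ_i > 0, have cdfs agreeing at both τ and τ′, then ε_1 = ε_2 and μ_1 = μ_2. -/

import Mathlib

open MeasureTheory ProbabilityTheory Filter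
open scoped Classical

noncomputable section

/-- The standard normal density. -/
def stdPdf (x : ℝ) : ℝ := (Real.sqrt (2 * Real.pi))⁻¹ * Real.exp (-(x ^ 2) / 2)

/-- The standard normal cumulative distribution function. -/
def Phi (t : ℝ) : ℝ := ∫ x in Set.Iic t, stdPdf x

/-- `D(μ; τ, τ')`. -/
def Dfun (μ τ τ' : ℝ) : ℝ := (Phi τ - Phi (τ - μ)) / (Phi τ' - Phi (τ' - μ))

/-- Empirical cdf of a sample of size `n`. -/
def empCdf (n : ℕ) (X : Fin n → ℝ) (t : ℝ) : ℝ :=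
  (n : ℝ)⁻¹ * ∑ i, if X i ≤ t then (1 : ℝ) else 0

/-- Upper envelope `F⁺ₐ`. -/
def envP (n : ℕ) (a : ℝ) (G : ℝ → ℝ) (t : ℝ) : ℝ :=
  (2 * G t + a ^ 2 / n + (a / Real.sqrt n) * Real.sqrt (a ^ 2 / n + 4 * G t - 4 * (G t) ^ 2)) /
    (2 * (1 + a ^ 2 / n))

/-- Lower envelope `F⁻ₐ`. -/
def envM (n : ℕ) (a : ℝ) (G : ℝ → ℝ) (t : ℝ) : ℝ :=
  (2 * G t + a ^ 2 / n - (a / Real.sqrt n) * Real.sqrt (a ^ 2 / n + 4 * G t - 4 * (G t) ^ 2)) /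
    (2 * (1 + a ^ 2 / n))

/-- Grid points `t_j = (j - 1)/√(2 log n)`. -/
def gridPt (n : ℕ) (j : ℕ) : ℝ := ((j : ℝ) - 1) / Real.sqrt (2 * Real.log n)

/-- Right-hand side ratio used in the defining equation for `μ̂⁽ʲ⁾`. -/
def ratioJ (n : ℕ) (a : ℝ) (X : Fin n → ℝ) (j : ℕ) : ℝ :=
  (Phi (gridPt n j) - envP n a (empCdf n X) (gridPt n j)) /
    (Phi (gridPt n (j + 1)) - envM n a (empCdf n X) (gridPt n (j + 1)))

/-- `μ̂⁽ʲ⁾`: the solution of `D(μ; t_j, t_{j+1}) = ratio`, when it exists (else 0). -/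
def muHatJ (n : ℕ) (a : ℝ) (X : Fin n → ℝ) (j : ℕ) : ℝ :=
  if h : ∃ μ > 0, Dfun μ (gridPt n j) (gridPt n (j + 1)) = ratioJ n a X j then h.choose else 0

/-- `ε̂⁽ʲ⁾ₐ`. -/
def epsHatJ (n : ℕ) (a : ℝ) (X : Fin n → ℝ) (j : ℕ) : ℝ :=
  if ∃ μ > 0, Dfun μ (gridPt n j) (gridPt n (j + 1)) = ratioJ n a X j then
    (Phi (gridPt n j) - envP n a (empCdf n X) (gridPt n j)) /
      (Phi (gridPt n j) - Phi (gridPt n j - muHatJ n a X j))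
  else 0

/-- The grid estimator `ε̂*ₐ = max_j ε̂⁽ʲ⁾ₐ`. -/
def epsHatStar (n : ℕ) (a : ℝ) (X : Fin n → ℝ) : ℝ :=
  sSup ((fun j => epsHatJ n a X j) '' (Set.Icc 1 (Nat.ceil (2 * Real.log n))))

/-- The statistic `W_n⁺`, as a function of a uniform sample. -/
def WnPlus (n : ℕ) (U : Fin n → ℝ) : ℝ :=
  sSup ((fun t => Real.sqrt n * |empCdf n U t - t| / Real.sqrt (t * (1 - t))) ''
    (Set.Icc (1 / 2) (Phi (Real.sqrt (2 * Real.log n)))))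

/-- The statistic `Y_n`, as a function of the sample, for underlying cdf `F`. -/
def Yn (n : ℕ) (F : ℝ → ℝ) (X : Fin n → ℝ) : ℝ :=
  sSup ((fun t => Real.sqrt n * |empCdf n X t - F t| / Real.sqrt (F t * (1 - F t))) ''
    (Set.Icc 0 (Real.sqrt (2 * Real.log n))))

/-- The statistic `W_n⁺⁺(c₀)`, as a function of the sample, for underlying cdf `F`. -/
def WnPP (c0 : ℝ) (n : ℕ) (F : ℝ → ℝ) (X : Fin n → ℝ) : ℝ :=
  sSup ((fun x => Real.sqrt n * |empCdf n X x - F x| / Real.sqrt (F x * (1 - F x))) ''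
    {x : ℝ | empCdf n X 0 - Real.sqrt (c0 * Real.log n / n) ≤ F x ∧
      F x ≤ Phi (Real.sqrt (2 * Real.log n))})

/-- cdf of the two-point Gaussian mixture `(1-ε)N(0,1) + εN(μ,1)`. -/
def twoPointCdf (ε μ : ℝ) (t : ℝ) : ℝ := (1 - ε) * Phi t + ε * Phi (t - μ)

/-- cdf of the one-sided Gaussian mixture `(1-ε)N(0,1) + ε ∫ N(μ,1) dH(μ)`. -/
def oneSidedCdf (ε : ℝ) (H : Measure ℝ) (t : ℝ) : ℝ :=
  (1 - ε) * Phi t + ε * ∫ m, Phi (t - m) ∂H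

/-- cdf of the Uniform(0,1) distribution. -/
def unifCdf (t : ℝ) : ℝ := max 0 (min t 1)

/-- `X₁, …, Xₙ` are i.i.d. with cdf `F` under `P`. -/
def IIDWithCdf {Ω : Type} [MeasurableSpace Ω] (P : Measure Ω) {n : ℕ}
    (X : Fin n → Ω → ℝ) (F : ℝ → ℝ) : Prop :=
  (∀ i, Measurable (X i)) ∧ iIndepFun X P ∧
    ∀ i t, P {ω | X i ω ≤ t} = ENNReal.ofReal (F t)

/-- The event that `F` lies inside the envelope on `[0, √(2 log n)]`. -/
def EnvEvent (n : ℕ) (a : ℝ) (F : ℝ → ℝ) (X : Fin n → ℝ) : Prop :=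
  ∀ t ∈ Set.Icc (0 : ℝ) (Real.sqrt (2 * Real.log n)),
    envM n a (empCdf n X) t ≤ F t ∧ F t ≤ envP n a (empCdf n X) t

/-- The detection boundary `ρ*(β)`. -/
def rhoStar (β : ℝ) : ℝ :=
  if β ≤ 3 / 4 then β - 1 / 2 else (1 - Real.sqrt (1 - β)) ^ 2

/-!
`D(·; τ, τ')` is strictly decreasing on `(0, ∞)`: writing both differences of `Φ` as integrals
`∫₀^m φ(τ - s) ds`, the sign of the derivative reduces to the pointwise inequality
`φ(τ - m) φ(τ' - s) < φ(τ' - m) φ(τ - s)` for `s < m`, i.e. to the monotone likelihood ratio of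
the Gaussian location family. Since `Φ(t) - F(t) = ε (Φ(t) - Φ(t - μ))`, the factor `ε` cancels
in the ratio at `τ` and `τ'`, so `D(μ; τ, τ')` equals that ratio and determines `μ`; then the
value at `τ` determines `ε`.
-/

lemma continuous_stdPdf : Continuous stdPdf := by
  unfold stdPdf; fun_prop

lemma stdPdf_pos (x : ℝ) : 0 < stdPdf x := by
  unfold stdPdf; positivity

lemma integrable_stdPdf : Integrable stdPdf := by
  have h : stdPdf = fun x => (Real.sqrt (2 * Real.pi))⁻¹ * Real.exp (-(1 / 2) * x ^ 2) := by
    funext x; unfold stdPdf; ring_nf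
  rw [h]
  exact (integrable_exp_neg_mul_sq (by norm_num)).const_mul _

lemma Phi_sub_Phi (a b : ℝ) : Phi b - Phi a = ∫ x in a..b, stdPdf x :=
  intervalIntegral.integral_Iic_sub_Iic integrable_stdPdf.integrableOn integrable_stdPdf.integrableOn

lemma Phi_strictMono : StrictMono Phi := fun a b hab => by
  have := intervalIntegral.intervalIntegral_pos_of_pos integrable_stdPdf.intervalIntegrable
    stdPdf_pos hab
  linarith [Phi_sub_Phi a b]

lemma hasDerivAt_Phi (x : ℝ) : HasDerivAt Phi (stdPdf x) x := by
  have h : HasDerivAt (fun u => Phi 0 + ∫ t in (0 : ℝ)..u, stdPdf t) (stdPdf x) x :=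
    (intervalIntegral.integral_hasDerivAt_right integrable_stdPdf.intervalIntegrable
      (continuous_stdPdf.stronglyMeasurableAtFilter _ _) continuous_stdPdf.continuousAt).const_add _
  have heq : (fun u => Phi 0 + ∫ t in (0 : ℝ)..u, stdPdf t) = Phi := by
    funext u; rw [← Phi_sub_Phi]; ring
  rwa [heq] at h

lemma Phi_sub_Phi_sub_pos (τ : ℝ) {m : ℝ} (hm : 0 < m) : 0 < Phi τ - Phi (τ - m) :=
  sub_pos.2 (Phi_strictMono (by linarith))

lemma Phi_sub_Phi_sub_eq_integral (τ m : ℝ) :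
    Phi τ - Phi (τ - m) = ∫ s in (0 : ℝ)..m, stdPdf (τ - s) := by
  rw [Phi_sub_Phi, intervalIntegral.integral_comp_sub_left stdPdf τ, sub_zero]

lemma hasDerivAt_Phi_sub_Phi_sub (τ m : ℝ) :
    HasDerivAt (fun m => Phi τ - Phi (τ - m)) (stdPdf (τ - m)) m := by
  simpa using ((hasDerivAt_Phi (τ - m)).comp m ((hasDerivAt_id m).const_sub τ)).const_sub (Phi τ)

lemma stdPdf_sub_mul_stdPdf_sub_lt {τ τ' m s : ℝ} (hττ' : τ < τ') (hs : s < m) :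
    stdPdf (τ - m) * stdPdf (τ' - s) < stdPdf (τ' - m) * stdPdf (τ - s) := by
  have hexp : Real.exp (-(τ - m) ^ 2 / 2) * Real.exp (-(τ' - s) ^ 2 / 2) <
      Real.exp (-(τ' - m) ^ 2 / 2) * Real.exp (-(τ - s) ^ 2 / 2) := by
    rw [← Real.exp_add, ← Real.exp_add, Real.exp_lt_exp]
    nlinarith [mul_pos (sub_pos.2 hττ') (sub_pos.2 hs)]
  unfold stdPdf
  linear_combination (Real.sqrt (2 * Real.pi))⁻¹ ^ 2 * hexp

lemma stdPdf_sub_mul_lt_mul_Phi_sub {τ τ' m : ℝ} (hττ' : τ < τ') (hm : 0 < m) :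
    stdPdf (τ - m) * (Phi τ' - Phi (τ' - m)) < stdPdf (τ' - m) * (Phi τ - Phi (τ - m)) := by
  have hint : ∀ d : ℝ, IntervalIntegrable (fun s => stdPdf (d - s)) volume 0 m :=
    fun d => (continuous_stdPdf.comp (continuous_const.sub continuous_id)).intervalIntegrable 0 m
  have hpos : 0 < ∫ s in (0 : ℝ)..m,
      (stdPdf (τ' - m) * stdPdf (τ - s) - stdPdf (τ - m) * stdPdf (τ' - s)) :=
    intervalIntegral.intervalIntegral_pos_of_pos_on
      (((hint τ).const_mul _).sub ((hint τ').const_mul _))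
      (fun s hs => sub_pos.2 (stdPdf_sub_mul_stdPdf_sub_lt hττ' hs.2)) hm
  rw [intervalIntegral.integral_sub ((hint τ).const_mul _) ((hint τ').const_mul _),
    intervalIntegral.integral_const_mul, intervalIntegral.integral_const_mul] at hpos
  rw [Phi_sub_Phi_sub_eq_integral τ m, Phi_sub_Phi_sub_eq_integral τ' m]
  linarith

lemma Dfun_strictAntiOn {τ τ' : ℝ} (hττ' : τ < τ') :
    StrictAntiOn (fun m => Dfun m τ τ') (Set.Ioi 0) := by
  have hderiv : ∀ m ∈ Set.Ioi (0 : ℝ), HasDerivAt (fun m => Dfun m τ τ')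
      ((stdPdf (τ - m) * (Phi τ' - Phi (τ' - m)) - (Phi τ - Phi (τ - m)) * stdPdf (τ' - m)) /
        (Phi τ' - Phi (τ' - m)) ^ 2) m := fun m hm =>
    (hasDerivAt_Phi_sub_Phi_sub τ m).div (hasDerivAt_Phi_sub_Phi_sub τ' m)
      (Phi_sub_Phi_sub_pos τ' hm).ne'
  refine strictAntiOn_of_deriv_neg (convex_Ioi 0)
    (fun m hm => (hderiv m hm).continuousAt.continuousWithinAt) fun m hm => ?_
  rw [interior_Ioi] at hm
  rw [(hderiv m hm).deriv]
  refine div_neg_of_neg_of_pos ?_ (pow_pos (Phi_sub_Phi_sub_pos τ' hm) 2)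
  linarith [stdPdf_sub_mul_lt_mul_Phi_sub hττ' hm]

lemma Phi_sub_twoPointCdf (ε μ t : ℝ) :
    Phi t - twoPointCdf ε μ t = ε * (Phi t - Phi (t - μ)) := by
  unfold twoPointCdf; ring

lemma Dfun_eq_twoPointCdf_ratio {ε : ℝ} (hε : ε ≠ 0) (μ τ τ' : ℝ) :
    Dfun μ τ τ' = (Phi τ - twoPointCdf ε μ τ) / (Phi τ' - twoPointCdf ε μ τ') := by
  rw [Phi_sub_twoPointCdf, Phi_sub_twoPointCdf, mul_div_mul_left _ _ hε, Dfun]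

lemma eq_Phi_sub_twoPointCdf_div (ε τ : ℝ) {μ : ℝ} (hμ : 0 < μ) :
    ε = (Phi τ - twoPointCdf ε μ τ) / (Phi τ - Phi (τ - μ)) := by
  rw [Phi_sub_twoPointCdf, mul_div_cancel_right₀ _ (Phi_sub_Phi_sub_pos τ hμ).ne']

theorem stmt16_general (ε μ τ τ' : ℝ) (hε : 0 < ε) (hμ : 0 < μ) (hττ' : τ < τ') :
    (Dfun μ τ τ' = (Phi τ - twoPointCdf ε μ τ) / (Phi τ' - twoPointCdf ε μ τ') ∧
      ∀ m : ℝ, 0 < m →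
        Dfun m τ τ' = (Phi τ - twoPointCdf ε μ τ) / (Phi τ' - twoPointCdf ε μ τ') → m = μ) ∧
    ε = (Phi τ - twoPointCdf ε μ τ) / (Phi τ - Phi (τ - μ)) ∧
    (∀ ε₁ μ₁ ε₂ μ₂ : ℝ, 0 < ε₁ → ε₁ ≤ 1 → 0 < μ₁ → 0 < ε₂ → ε₂ ≤ 1 → 0 < μ₂ →
      twoPointCdf ε₁ μ₁ τ = twoPointCdf ε₂ μ₂ τ →
      twoPointCdf ε₁ μ₁ τ' = twoPointCdf ε₂ μ₂ τ' → ε₁ = ε₂ ∧ μ₁ = μ₂) := by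
  have hD := Dfun_strictAntiOn hττ'
  refine ⟨⟨Dfun_eq_twoPointCdf_ratio hε.ne' μ τ τ', fun m hm heq => ?_⟩,
    eq_Phi_sub_twoPointCdf_div ε τ hμ, ?_⟩
  · exact hD.injOn hm hμ (by rw [heq, Dfun_eq_twoPointCdf_ratio hε.ne' μ τ τ'])
  · intro ε₁ μ₁ ε₂ μ₂ hε₁ _ hμ₁ hε₂ _ hμ₂ hτ_eq hτ'_eq
    have hμ_eq : μ₁ = μ₂ := hD.injOn hμ₁ hμ₂ (by
      rw [Dfun_eq_twoPointCdf_ratio hε₁.ne' μ₁ τ τ', hτ_eq, hτ'_eq,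
        ← Dfun_eq_twoPointCdf_ratio hε₂.ne' μ₂ τ τ'])
    refine ⟨?_, hμ_eq⟩
    rw [eq_Phi_sub_twoPointCdf_div ε₁ τ hμ₁, hτ_eq, hμ_eq, ← eq_Phi_sub_twoPointCdf_div ε₂ τ hμ₂]

/-- the parameters of a two-point Gaussian mixture are identified
by the values of its cdf at two points `τ < τ'`. -/
theorem stmt16 (ε μ τ τ' : ℝ) (hε : 0 < ε) (hε1 : ε ≤ 1) (hμ : 0 < μ)
    (hτ : 0 ≤ τ) (hττ' : τ < τ') :
    (Dfun μ τ τ' = (Phi τ - twoPointCdf ε μ τ) / (Phi τ' - twoPointCdf ε μ τ') ∧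
      ∀ m : ℝ, 0 < m →
        Dfun m τ τ' = (Phi τ - twoPointCdf ε μ τ) / (Phi τ' - twoPointCdf ε μ τ') → m = μ) ∧
    ε = (Phi τ - twoPointCdf ε μ τ) / (Phi τ - Phi (τ - μ)) ∧
    (∀ ε₁ μ₁ ε₂ μ₂ : ℝ, 0 < ε₁ → ε₁ ≤ 1 → 0 < μ₁ → 0 < ε₂ → ε₂ ≤ 1 → 0 < μ₂ →
      twoPointCdf ε₁ μ₁ τ = twoPointCdf ε₂ μ₂ τ →
      twoPointCdf ε₁ μ₁ τ' = twoPointCdf ε₂ μ₂ τ' → ε₁ = ε₂ ∧ μ₁ = μ₂) :=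
  stmt16_general ε μ τ τ' hε hμ hττ'

end
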